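/- Let X be a nonempty type and A ⊆ (ℕ → X). Suppose the game tree of undecided positions is ranked by a well-order: there are a linearly ordered type Γ with well-founded strict order and a function π from the undecided positions (for A) to Γ such that whenever s and s ++ [x] are both undecided, π(s ++ [x]) < π(s). Then the game with payoff A is determined: either player I has a winning strategy or player II has a winning strategy. -/

import Mathlib

/-- A sequence `f : ℕ → X` extends a finite position `s = [a₀, …, a_{n−1}]`
if `f i = aᵢ` for all `i < n`. -/
def ExtendsPos {X : Type*} (f : ℕ → X) (s : List X) : Prop :=
  ∀ (i : ℕ) (h : i < s.length), f i = s.get ⟨i, h⟩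

/-- A position `s` is undecided for `A` if some extension of `s` lies in `A`
and some extension of `s` lies outside `A`. -/
def Undecided {X : Type*} (A : Set (ℕ → X)) (s : List X) : Prop :=
  (∃ f : ℕ → X, ExtendsPos f s ∧ f ∈ A) ∧ (∃ f : ℕ → X, ExtendsPos f s ∧ f ∉ A)


/-!
Call a position forcing for a player if that player can reach, in finitely many moves and
against any opposition, a position all of whose extensions are wins for them. Well-founded
induction along the rank shows that every position is forcing for player I or for player II:
on your turn, either some move reaches a position forcing for you, or every move reaches one
forcing for your opponent. By always moving to a forcing position, a player keeps every
position of the play forcing for them. Since the tree of undecided positions has no infinite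
branch, the play passes through a decided position; having a winning extension, it is won.
-/

section

variable {X : Type*}

theorem ExtendsPos.of_append {f : ℕ → X} {s t : List X} (h : ExtendsPos f (s ++ t)) :
    ExtendsPos f s := by
  intro i hi
  simpa [List.getElem_append_left hi] using h i (by simp; omega)

theorem exists_extendsPos [Nonempty X] (s : List X) : ∃ f : ℕ → X, ExtendsPos f s :=
  ⟨fun i => if h : i < s.length then s[i] else Classical.arbitrary X, fun i hi => by simp [hi]⟩

theorem extendsPos_map_range (f : ℕ → X) (n : ℕ) : ExtendsPos f ((List.range n).map f) := by
  intro i hi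
  simp

theorem map_range_succ (f : ℕ → X) (n : ℕ) :
    (List.range (n + 1)).map f = (List.range n).map f ++ [f n] := by
  simp [List.range_succ]

theorem undecided_compl {A : Set (ℕ → X)} {s : List X} : Undecided Aᶜ s ↔ Undecided A s := by
  simp only [Undecided, Set.mem_compl_iff, not_not]
  exact and_comm

theorem forall_mem_or_forall_notMem_of_not_undecided {A : Set (ℕ → X)} {s : List X}
    (h : ¬ Undecided A s) :
    (∀ f, ExtendsPos f s → f ∈ A) ∨ ∀ f, ExtendsPos f s → f ∉ A := by
  rw [Undecided, not_and_or] at h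
  push Not at h
  exact h.symm

/-- `Forces B P s`: from `s`, the player who moves at the positions whose length satisfies `P`
can force, in finitely many moves, a position all of whose extensions lie in `B`. -/
inductive Forces (B : Set (ℕ → X)) (P : ℕ → Prop) : List X → Prop
  | won {s : List X} : (∀ f, ExtendsPos f s → f ∈ B) → Forces B P s
  | move {s : List X} (x : X) : P s.length → Forces B P (s ++ [x]) → Forces B P s
  | wait {s : List X} : ¬ P s.length → (∀ x, Forces B P (s ++ [x])) → Forces B P s

namespace Forces

variable {B : Set (ℕ → X)} {P : ℕ → Prop}

theorem exists_extendsPos_mem [Nonempty X] {s : List X} (h : Forces B P s) :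
    ∃ f, ExtendsPos f s ∧ f ∈ B := by
  induction h with
  | won hs =>
    obtain ⟨f, hf⟩ := exists_extendsPos (X := X) _
    exact ⟨f, hf, hs f hf⟩
  | move _ _ _ ih =>
    obtain ⟨f, hf, hfB⟩ := ih
    exact ⟨f, hf.of_append, hfB⟩
  | wait _ _ ih =>
    obtain ⟨f, hf, hfB⟩ := ih (Classical.arbitrary X)
    exact ⟨f, hf.of_append, hfB⟩

theorem mem_of_not_undecided [Nonempty X] {s : List X} {f : ℕ → X} (h : Forces B P s)
    (hf : ExtendsPos f s) (hs : ¬ Undecided B s) : f ∈ B := by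
  obtain ⟨g, hg, hgB⟩ := h.exists_extendsPos_mem
  exact (forall_mem_or_forall_notMem_of_not_undecided hs).elim (· f hf)
    fun hnot => absurd hgB (hnot g hg)

noncomputable def strategy [Nonempty X] (B : Set (ℕ → X)) (P : ℕ → Prop) (s : List X) : X :=
  Classical.epsilon fun x => Forces B P (s ++ [x])

theorem append_singleton [Nonempty X] {s : List X} {x : X} (h : Forces B P s)
    (hx : P s.length → x = strategy B P s) : Forces B P (s ++ [x]) := by
  cases h with
  | won hs => exact won fun f hf => hs f hf.of_append
  | move y hP hy =>
    rw [hx hP]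
    exact Classical.epsilon_spec (p := fun x => Forces B P (s ++ [x])) ⟨y, hy⟩
  | wait _ hall => exact hall x

theorem map_range_of_accords [Nonempty X] (h : Forces B P []) {f : ℕ → X}
    (hf : ∀ n, P n → f n = strategy B P ((List.range n).map f)) (n : ℕ) :
    Forces B P ((List.range n).map f) := by
  induction n with
  | zero => exact h
  | succ n ih =>
    rw [map_range_succ]
    exact ih.append_singleton fun hP => hf n (by simpa using hP)

theorem mem_of_accords [Nonempty X] (h : Forces B P []) {f : ℕ → X}
    (hf : ∀ n, P n → f n = strategy B P ((List.range n).map f))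
    (hdecided : ∃ n, ¬ Undecided B ((List.range n).map f)) : f ∈ B := by
  obtain ⟨n, hn⟩ := hdecided
  exact (h.map_range_of_accords hf n).mem_of_not_undecided (extendsPos_map_range f n) hn

end Forces

def IsUndecidedChild (A : Set (ℕ → X)) (t s : {s : List X // Undecided A s}) : Prop :=
  ∃ x, t.1 = s.1 ++ [x]

variable {A : Set (ℕ → X)}

theorem forces_or_forces_compl_of_undecided (hwf : WellFounded (IsUndecidedChild A))
    (P : ℕ → Prop) (s : {s : List X // Undecided A s}) :
    Forces A P s.1 ∨ Forces Aᶜ (¬ P ·) s.1 := by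
  induction s using hwf.induction with
  | _ s ih =>
    obtain ⟨s, hs⟩ := s
    have hchild (x : X) : Forces A P (s ++ [x]) ∨ Forces Aᶜ (¬ P ·) (s ++ [x]) := by
      by_cases hu : Undecided A (s ++ [x])
      · exact ih ⟨s ++ [x], hu⟩ ⟨x, rfl⟩
      · exact (forall_mem_or_forall_notMem_of_not_undecided hu).imp .won .won
    by_cases hP : P s.length
    · by_cases hmove : ∃ x, Forces A P (s ++ [x])
      · obtain ⟨x, hx⟩ := hmove
        exact .inl (.move x hP hx)
      · push Not at hmove
        exact .inr (.wait (not_not_intro hP) fun x => (hchild x).resolve_left (hmove x))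
    · by_cases hmove : ∃ x, Forces Aᶜ (¬ P ·) (s ++ [x])
      · obtain ⟨x, hx⟩ := hmove
        exact .inr (.move x hP hx)
      · push Not at hmove
        exact .inl (.wait hP fun x => (hchild x).resolve_right (hmove x))

theorem forces_or_forces_compl (hwf : WellFounded (IsUndecidedChild A)) (P : ℕ → Prop)
    (s : List X) : Forces A P s ∨ Forces Aᶜ (¬ P ·) s := by
  by_cases hu : Undecided A s
  · exact forces_or_forces_compl_of_undecided hwf P ⟨s, hu⟩
  · exact (forall_mem_or_forall_notMem_of_not_undecided hu).imp .won .won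

theorem exists_not_undecided_map_range (hwf : WellFounded (IsUndecidedChild A)) (f : ℕ → X) :
    ∃ n, ¬ Undecided A ((List.range n).map f) := by
  by_contra! hund
  have : IsWellFounded _ (IsUndecidedChild A) := ⟨hwf⟩
  obtain ⟨n, hn⟩ := WellFounded.not_rel_apply_succ (r := IsUndecidedChild A)
    fun n => ⟨_, hund n⟩
  exact hn ⟨f n, map_range_succ f n⟩

end

/-- If the tree of undecided positions of the game with payoff `A` is ranked by a
well-order — there are a linearly ordered type `Γ` with well-founded strict order
and `π` from the undecided positions to `Γ` with `π (s ++ [x]) < π s` whenever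
both are undecided — then the game is determined: player I has a winning strategy
(every play `f` with `f (2k) = τ [f 0, …, f (2k−1)]` for all `k` lies in `A`) or
player II has a winning strategy (every play `f` with
`f (2k+1) = σ [f 0, …, f (2k)]` for all `k` lies outside `A`). -/
theorem determined_of_ranked_undecided_tree {X : Type*} [Nonempty X]
    (A : Set (ℕ → X))
    (h : ∃ (Γ : Type*) (inst : LinearOrder Γ),
      WellFounded inst.lt ∧
      ∃ π : {s : List X // Undecided A s} → Γ,
        ∀ s t : {s : List X // Undecided A s},
          (∃ x : X, (t : List X) = (s : List X) ++ [x]) → inst.lt (π t) (π s)) :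
    (∃ τ : List X → X, ∀ f : ℕ → X,
        (∀ k : ℕ, f (2 * k) = τ ((List.range (2 * k)).map f)) → f ∈ A) ∨
    (∃ σ : List X → X, ∀ f : ℕ → X,
        (∀ k : ℕ, f (2 * k + 1) = σ ((List.range (2 * k + 1)).map f)) → f ∉ A) := by
  obtain ⟨Γ, inst, wf, π, hπ⟩ := h
  have hwf : WellFounded (IsUndecidedChild A) := Subrelation.wf (hπ _ _) (InvImage.wf π wf)
  rcases forces_or_forces_compl hwf Even [] with hI | hII
  · refine .inl ⟨Forces.strategy A Even, fun f hf => hI.mem_of_accords ?_ ?_⟩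
    · rintro n ⟨k, rfl⟩
      rw [← two_mul]
      exact hf k
    · exact exists_not_undecided_map_range hwf f
  · refine .inr ⟨Forces.strategy Aᶜ (¬ Even ·), fun f hf => hII.mem_of_accords ?_ ?_⟩
    · intro n hn
      obtain ⟨k, rfl⟩ := Nat.not_even_iff_odd.mp hn
      exact hf k
    · simpa only [undecided_compl] using exists_not_undecided_map_range hwf f
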